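/- Every subgroup G of GL₂(Z/3Z) that (i) satisfies λ₂(λ₃(G)) = {e}, (ii) has surjective determinant onto (Z/3Z)^×, and (iii) contains an element of trace 0 and determinant −1, is conjugate in GL₂(Z/3Z) to a subgroup of the split Cartan subgroup (the subgroup of diagonal matrices). -/

import Mathlib

/-!
Conjugate the given element `g₀` of trace `0` and determinant `-1` to `d = diag(1, -1)`.
Being an involution, `g₀ = g₀³` lies in `λ₃(G)`, which is abelian, together with `g³` and
`[g₀, g]` for every `g ∈ G`. Since `[d, a] = d (a d a⁻¹)⁻¹`, commuting with `[d, a]` makes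
`a d a⁻¹` a diagonal involution of trace `0`, i.e. `±d`; the sign of `-d` survives in `a³ d a⁻³`,
which must be `d`. So every conjugated `g` commutes with `d` and is therefore diagonal.
-/

open Matrix

/-- `lam r G = [G,G] G^r`, the subgroup generated by commutators and `r`-th powers. -/
def lam (r : ℕ) (G : Type*) [Group G] : Subgroup G :=
  commutator G ⊔ Subgroup.closure {x : G | ∃ g : G, x = g ^ r}

open scoped commutatorElement

section Lam

variable {G : Type*} [Group G]

theorem pow_mem_lam (r : ℕ) (a : G) : a ^ r ∈ lam r G :=
  Subgroup.mem_sup_right (Subgroup.subset_closure ⟨a, rfl⟩)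

theorem commutatorElement_mem_lam (r : ℕ) (a b : G) : ⁅a, b⁆ ∈ lam r G :=
  Subgroup.mem_sup_left
    (Subgroup.commutator_mem_commutator (Subgroup.mem_top a) (Subgroup.mem_top b))

theorem commute_of_lam_eq_bot {r : ℕ} (h : lam r G = ⊥) (a b : G) : Commute a b :=
  commutatorElement_eq_one_iff_mul_comm.mp (by simpa [h] using commutatorElement_mem_lam r a b)

theorem commute_of_mem_lam {m r : ℕ} (h : lam m (lam r G) = ⊥) {a b : G} (ha : a ∈ lam r G)
    (hb : b ∈ lam r G) : Commute a b :=
  congrArg Subtype.val (commute_of_lam_eq_bot h ⟨a, ha⟩ ⟨b, hb⟩)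

theorem commute_pow_three_and_commutatorElement {s : G} (h : lam 2 (lam 3 G) = ⊥)
    (hs : s ^ 2 = 1) (x : G) : Commute s (x ^ 3) ∧ Commute s ⁅s, x⁆ := by
  have hs3 : s ∈ lam 3 G := by
    simpa [pow_succ, hs] using pow_mem_lam 3 s
  exact ⟨commute_of_mem_lam h hs3 (pow_mem_lam 3 x),
    commute_of_mem_lam h hs3 (commutatorElement_mem_lam 3 s x)⟩

theorem commute_commutatorElement_iff_commute_conj {d a : G} :
    Commute d ⁅d, a⁆ ↔ Commute d (a * d * a⁻¹) := by
  have hda : ⁅d, a⁆ = d * (a * d * a⁻¹)⁻¹ := by rw [commutatorElement_def]; group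
  rw [hda, ← Commute.inv_right_iff (b := a * d * a⁻¹)]
  exact ⟨fun h => by
    simpa only [inv_mul_cancel_left] using (Commute.refl d).inv_right.mul_right h,
    (Commute.refl d).mul_right⟩

end Lam

section NoZeroDivisors

variable {R : Type*} [Ring R] [NoZeroDivisors R]

theorem eq_zero_of_eq_neg (h2 : (2 : R) ≠ 0) {x : R} (h : x = -x) : x = 0 := by
  have h2x : 2 * x = 0 := by
    rw [two_mul]
    nth_rw 1 [h]
    exact neg_add_cancel x
  exact (mul_eq_zero.mp h2x).resolve_left h2

theorem offDiag_eq_zero_of_commute (h2 : (2 : R) ≠ 0) {M : Matrix (Fin 2) (Fin 2) R}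
    (h : Commute (diagonal ![1, -1]) M) : ∀ i j, i ≠ j → M i j = 0 := by
  intro i j hij
  have hij' := congr_fun₂ h.eq i j
  simp only [diagonal_mul, mul_diagonal] at hij'
  fin_cases i <;> fin_cases j
  all_goals first
    | exact absurd rfl hij
    | exact eq_zero_of_eq_neg h2 (by simpa using hij')
    | exact eq_zero_of_eq_neg h2 (by simpa using hij'.symm)

end NoZeroDivisors

section SplitCartan

variable {K : Type*} [Field K]

variable (K) in
def diagOneNegOne : GL (Fin 2) K :=
  GeneralLinearGroup.mkOfDetNeZero (diagonal ![1, -1]) (by simp)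

@[simp]
theorem coe_diagOneNegOne : (diagOneNegOne K : Matrix (Fin 2) (Fin 2) K) = diagonal ![1, -1] := rfl

theorem diagOneNegOne_mul_self : diagOneNegOne K * diagOneNegOne K = 1 := by
  ext i j
  fin_cases i <;> fin_cases j <;> simp

theorem offDiag_eq_zero_of_commute_diagOneNegOne (h2 : (2 : K) ≠ 0) {a : GL (Fin 2) K}
    (h : Commute (diagOneNegOne K) a) : ∀ i j, i ≠ j → (a : Matrix (Fin 2) (Fin 2) K) i j = 0 :=
  offDiag_eq_zero_of_commute h2 (by simpa using h.map (Units.coeHom (Matrix (Fin 2) (Fin 2) K)))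

theorem eq_diagOneNegOne_or_eq_neg (h2 : (2 : K) ≠ 0) {e : GL (Fin 2) K}
    (hc : Commute (diagOneNegOne K) e) (he : e * e = 1)
    (htr : trace (e : Matrix (Fin 2) (Fin 2) K) = 0) :
    e = diagOneNegOne K ∨ e = -diagOneNegOne K := by
  have hoff := offDiag_eq_zero_of_commute_diagOneNegOne h2 hc
  have h01 := hoff 0 1 (by decide)
  have h10 := hoff 1 0 (by decide)
  have h00 : (e : Matrix (Fin 2) (Fin 2) K) 0 0 * (e : Matrix (Fin 2) (Fin 2) K) 0 0 = 1 := by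
    simpa [mul_apply, Fin.sum_univ_two, h01] using (GeneralLinearGroup.ext_iff _ _).mp he 0 0
  have h11 : (e : Matrix (Fin 2) (Fin 2) K) 1 1 = -(e : Matrix (Fin 2) (Fin 2) K) 0 0 := by
    rw [trace_fin_two] at htr
    linear_combination htr
  rcases mul_self_eq_one_iff.mp h00 with h | h
  · left
    ext i j
    fin_cases i <;> fin_cases j <;> simp [h, h11, h01, h10]
  · right
    ext i j
    fin_cases i <;> fin_cases j <;> simp [h, h11, h01, h10]

theorem commute_diagOneNegOne_of_commute_pow_three (h2 : (2 : K) ≠ 0) {a : GL (Fin 2) K}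
    (h3 : Commute (diagOneNegOne K) (a ^ 3))
    (hc : Commute (diagOneNegOne K) ⁅diagOneNegOne K, a⁆) :
    Commute (diagOneNegOne K) a := by
  set d := diagOneNegOne K
  have he : a * d * a⁻¹ * (a * d * a⁻¹) = 1 := by
    rw [show a * d * a⁻¹ * (a * d * a⁻¹) = a * (d * d) * a⁻¹ by group, diagOneNegOne_mul_self]
    group
  have htr : trace ((a * d * a⁻¹ : GL (Fin 2) K) : Matrix (Fin 2) (Fin 2) K) = 0 := by
    rw [Units.val_mul, Units.val_mul, trace_units_conj]
    simp [d]
  rcases eq_diagOneNegOne_or_eq_neg h2 (commute_commutatorElement_iff_commute_conj.mp hc) he htr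
    with h | h
  · exact (mul_inv_eq_iff_eq_mul.mp h).symm
  · exfalso
    have hs : SemiconjBy a d (-d) := mul_inv_eq_iff_eq_mul.mp h
    have hs3 : SemiconjBy (a ^ 3) d (-d) := by
      rw [pow_three]
      exact hs.mul_left ((by simpa using hs.neg_right : SemiconjBy a (-d) d).mul_left hs)
    have hd : d = -d := mul_right_cancel (h3.eq.trans hs3.eq)
    have h00 := (GeneralLinearGroup.ext_iff _ _).mp hd 0 0
    simp [d] at h00
    exact one_ne_zero (eq_zero_of_eq_neg h2 h00)

end SplitCartan

set_option maxRecDepth 10000 in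
theorem exists_conj_eq_diagOneNegOne {A : GL (Fin 2) (ZMod 3)}
    (htr : trace (A : Matrix (Fin 2) (Fin 2) (ZMod 3)) = 0)
    (hdet : det (A : Matrix (Fin 2) (Fin 2) (ZMod 3)) = -1) :
    ∃ c : GL (Fin 2) (ZMod 3), c * A * c⁻¹ = diagOneNegOne (ZMod 3) := by
  obtain ⟨C, hC, hCA⟩ := (by decide : ∀ A : Matrix (Fin 2) (Fin 2) (ZMod 3), A.trace = 0 →
    A.det = -1 → ∃ C, C.det ≠ 0 ∧ C * A = diagonal ![1, -1] * C) _ htr hdet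
  refine ⟨GeneralLinearGroup.mkOfDetNeZero C hC, mul_inv_eq_iff_eq_mul.mpr (Units.ext ?_)⟩
  simpa using hCA

theorem stmt_17_general (G : Subgroup (GL (Fin 2) (ZMod 3)))
    (h1 : lam 2 ↥(lam 3 ↥G) = ⊥)
    (h3 : ∃ g ∈ G, Matrix.trace (g : Matrix (Fin 2) (Fin 2) (ZMod 3)) = 0 ∧
      Matrix.det (g : Matrix (Fin 2) (Fin 2) (ZMod 3)) = -1) :
    ∃ c : GL (Fin 2) (ZMod 3), ∀ g ∈ G, ∀ i j : Fin 2, i ≠ j →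
      ((c * g * c⁻¹ : GL (Fin 2) (ZMod 3)) : Matrix (Fin 2) (Fin 2) (ZMod 3)) i j = 0 := by
  obtain ⟨g₀, hg₀, htr, hdet⟩ := h3
  obtain ⟨c, hc⟩ := exists_conj_eq_diagOneNegOne htr hdet
  let φ : G →* GL (Fin 2) (ZMod 3) := (MulAut.conj c).toMonoidHom.comp G.subtype
  have hφ : φ ⟨g₀, hg₀⟩ = diagOneNegOne (ZMod 3) := hc
  have hsq : (⟨g₀, hg₀⟩ : G) ^ 2 = 1 := by
    have hinj : Function.Injective φ := (MulAut.conj c).injective.comp Subtype.val_injective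
    exact hinj (by rw [map_pow, hφ, pow_two, diagOneNegOne_mul_self, map_one])
  refine ⟨c, fun g hg => ?_⟩
  obtain ⟨hpow, hcomm⟩ := commute_pow_three_and_commutatorElement h1 hsq ⟨g, hg⟩
  have h2 : (2 : ZMod 3) ≠ 0 := by decide
  refine offDiag_eq_zero_of_commute_diagOneNegOne (a := φ ⟨g, hg⟩) h2 ?_
  exact commute_diagOneNegOne_of_commute_pow_three h2
    (by simpa only [map_pow, hφ] using hpow.map φ)
    (by simpa only [map_commutatorElement, hφ] using hcomm.map φ)

/-- Every subgroup of `GL₂(ℤ/3ℤ)` satisfying `λ₂(λ₃(G)) = {e}`, with surjective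
determinant and containing an element of trace `0` and determinant `−1`, is conjugate
to a subgroup of the diagonal (split Cartan) subgroup. -/
theorem stmt_17 (G : Subgroup (GL (Fin 2) (ZMod 3)))
    (h1 : lam 2 ↥(lam 3 ↥G) = ⊥)
    (h2 : ∀ u : (ZMod 3)ˣ, ∃ g ∈ G, Matrix.GeneralLinearGroup.det g = u)
    (h3 : ∃ g ∈ G, Matrix.trace (g : Matrix (Fin 2) (Fin 2) (ZMod 3)) = 0 ∧
      Matrix.det (g : Matrix (Fin 2) (Fin 2) (ZMod 3)) = -1) :
    ∃ c : GL (Fin 2) (ZMod 3), ∀ g ∈ G, ∀ i j : Fin 2, i ≠ j →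
      ((c * g * c⁻¹ : GL (Fin 2) (ZMod 3)) : Matrix (Fin 2) (Fin 2) (ZMod 3)) i j = 0 :=
  stmt_17_general G h1 h3
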